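/- arXiv:1803.00499 — 3 statements merged into one kernel-verified Lean document; each statement's English description precedes it below -/
import Mathlib

section
/- The quantum state diffusion (QSD) choice a(x) = (−iH + Σ_k (⟨x, L_k†x⟩ L_k − ½L_k†L_k − ½|⟨x, L_k x⟩|²))x, b_{k,1}(x) = (1/√2)(L_k − ⟨x, L_k x⟩)x, b_{k,2}(x) = (i/√2)(L_k − ⟨x, L_k x⟩)x satisfies, for all unit vectors x ∈ ℂ^n: a(x)x† + x a(x)† + Σ_k (b_{k,1}(x)b_{k,1}(x)† + b_{k,2}(x)b_{k,2}(x)†) = −i[H, xx†] + Σ_k (L_k xx† L_k† − ½{L_k†L_k, xx†}). -/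
/-!
Write `P = x x†` and `sₖ = ⟨x, Lₖ x⟩`. Since `a = M x` with `M = -iH + ∑ₖ Mₖ`, the drift
contributes `M P + P M†`. The two noise vectors of channel `k` are multiples of `(Lₖ - sₖ) x` with
coefficients whose squared moduli sum to one, so together they contribute `(Lₖ - sₖ) P (Lₖ - sₖ)†`.
What remains is the Hamiltonian identity plus, for each channel, an identity in `Lₖ`, `P` and `sₖ`
that holds in any complex star algebra.
-/

open Matrix Finset

/-- The outer product `v w†` of two complex vectors. -/
noncomputable def outerProd {n m : ℕ} (v : Fin n → ℂ) (w : Fin m → ℂ) :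
    Matrix (Fin n) (Fin m) ℂ :=
  Matrix.of fun i j => v i * star (w j)

/-- The inner product `⟨v, w⟩ = v†w`. -/
noncomputable def cInner {n : ℕ} (v w : Fin n → ℂ) : ℂ := ∑ i, star (v i) * w i

theorem cInner_eq_star_dotProduct {n : ℕ} (v w : Fin n → ℂ) : cInner v w = star v ⬝ᵥ w := rfl

theorem cInner_conjTranspose_mulVec {n m : ℕ} (A : Matrix (Fin n) (Fin m) ℂ) (v : Fin m → ℂ)
    (w : Fin n → ℂ) : cInner v (Aᴴ *ᵥ w) = star (cInner w (A *ᵥ v)) := by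
  rw [cInner_eq_star_dotProduct, cInner_eq_star_dotProduct, dotProduct_mulVec, ← star_mulVec,
    star_dotProduct]

theorem outerProd_eq_vecMulVec {n m : ℕ} (v : Fin n → ℂ) (w : Fin m → ℂ) :
    outerProd v w = vecMulVec v (star w) := rfl

theorem mul_outerProd_mul_conjTranspose {l n m k : ℕ} (A : Matrix (Fin l) (Fin n) ℂ)
    (v : Fin n → ℂ) (w : Fin m → ℂ) (B : Matrix (Fin k) (Fin m) ℂ) :
    A * outerProd v w * Bᴴ = outerProd (A *ᵥ v) (B *ᵥ w) := by
  rw [outerProd_eq_vecMulVec, outerProd_eq_vecMulVec, mul_vecMulVec, vecMulVec_mul, star_mulVec]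

theorem outerProd_mulVec_add_outerProd_mulVec {n : ℕ} (A : Matrix (Fin n) (Fin n) ℂ)
    (x : Fin n → ℂ) :
    outerProd (A *ᵥ x) x + outerProd x (A *ᵥ x) = A * outerProd x x + outerProd x x * Aᴴ := by
  have h1 := mul_outerProd_mul_conjTranspose A x x (1 : Matrix (Fin n) (Fin n) ℂ)
  have h2 := mul_outerProd_mul_conjTranspose (1 : Matrix (Fin n) (Fin n) ℂ) x x A
  rw [conjTranspose_one, mul_one, one_mulVec] at h1
  rw [one_mul, one_mulVec] at h2
  rw [h1, h2]

theorem outerProd_smul_add_outerProd_smul {n m : ℕ} {c d : ℂ} (h : star c * c + star d * d = 1)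
    (v : Fin n → ℂ) (w : Fin m → ℂ) :
    outerProd (c • v) (c • w) + outerProd (d • v) (d • w) = outerProd v w := by
  simp only [outerProd_eq_vecMulVec, star_smul, smul_vecMulVec, vecMulVec_smul, smul_smul,
    ← add_smul, h, one_smul]

theorem star_one_div_sqrt_two_mul_self_add_star_I_div_sqrt_two_mul_self :
    star (1 / Real.sqrt 2 : ℂ) * (1 / Real.sqrt 2 : ℂ) +
      star (Complex.I / Real.sqrt 2) * (Complex.I / Real.sqrt 2) = 1 := by
  have h2 : ((Real.sqrt 2 : ℝ) : ℂ) ^ 2 = 2 := by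
    rw [← Complex.ofReal_pow, Real.sq_sqrt zero_le_two, Complex.ofReal_ofNat]
  simp only [Complex.star_def, map_div₀, map_one, Complex.conj_ofReal, Complex.conj_I]
  field_simp
  linear_combination -h2 - Complex.I_sq

section StarAlgebra

variable {R : Type*} [Ring R] [StarRing R] [Algebra ℂ R] [StarModule ℂ R]

theorem IsSelfAdjoint.neg_I_smul_mul_add_mul_star {H : R} (hH : IsSelfAdjoint H) (P : R) :
    (-Complex.I • H) * P + P * star (-Complex.I • H) = -Complex.I • (H * P - P * H) := by
  rw [star_smul, hH.star_eq]
  simp only [star_neg, Complex.star_def, Complex.conj_I, neg_neg, smul_mul_assoc, mul_smul_comm]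
  module

theorem qsd_drift_add_noise (L P : R) (s : ℂ) :
    (star s • L - (1 / 2 : ℂ) • (star L * L) - ((1 / 2 : ℂ) * (‖s‖ : ℂ) ^ 2) • 1) * P +
        P * star (star s • L - (1 / 2 : ℂ) • (star L * L) - ((1 / 2 : ℂ) * (‖s‖ : ℂ) ^ 2) • 1) +
        (L - s • 1) * P * star (L - s • 1) =
      L * P * star L - (1 / 2 : ℂ) • (star L * L * P + P * (star L * L)) := by
  rw [← Complex.mul_conj', ← Complex.star_def]
  simp only [star_sub, star_smul, star_mul, star_star, star_one, star_div₀, star_ofNat]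
  simp only [sub_mul, mul_sub, smul_mul_assoc, mul_smul_comm, one_mul, mul_one, smul_sub,
    smul_smul, mul_assoc]
  module

end StarAlgebra

theorem qsd_unraveling_general (n K : ℕ) (H : Matrix (Fin n) (Fin n) ℂ) (hH : Hᴴ = H)
    (L : Fin K → Matrix (Fin n) (Fin n) ℂ) (x : Fin n → ℂ) :
    (letI a : Fin n → ℂ :=
        ((-Complex.I) • H +
          ∑ k, ((cInner x ((L k)ᴴ.mulVec x)) • L k - (1 / 2 : ℂ) • ((L k)ᴴ * L k) -
            ((1 / 2 : ℂ) * (‖cInner x ((L k).mulVec x)‖ : ℂ) ^ 2) •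
              (1 : Matrix (Fin n) (Fin n) ℂ))).mulVec x
     letI b1 : Fin K → Fin n → ℂ := fun k =>
        (1 / Real.sqrt 2 : ℂ) • ((L k).mulVec x - (cInner x ((L k).mulVec x)) • x)
     letI b2 : Fin K → Fin n → ℂ := fun k =>
        (Complex.I / Real.sqrt 2) • ((L k).mulVec x - (cInner x ((L k).mulVec x)) • x)
     outerProd a x + outerProd x a + ∑ k, (outerProd (b1 k) (b1 k) + outerProd (b2 k) (b2 k))) =
      (-Complex.I) • (H * outerProd x x - outerProd x x * H) +
        ∑ k, (L k * outerProd x x * (L k)ᴴ -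
          (1 / 2 : ℂ) • ((L k)ᴴ * L k * outerProd x x + outerProd x x * ((L k)ᴴ * L k))) := by
  simp only [cInner_conjTranspose_mulVec, outerProd_mulVec_add_outerProd_mulVec,
    outerProd_smul_add_outerProd_smul
      star_one_div_sqrt_two_mul_self_add_star_I_div_sqrt_two_mul_self]
  set P := outerProd x x
  have hnoise (k : Fin K) (s : ℂ) : outerProd (L k *ᵥ x - s • x) (L k *ᵥ x - s • x) =
      (L k - s • 1) * P * (L k - s • 1)ᴴ := by
    rw [mul_outerProd_mul_conjTranspose, sub_mulVec, smul_mulVec, one_mulVec]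
  have hdiss (k : Fin K) := qsd_drift_add_noise (L k) P (cInner x (L k *ᵥ x))
  have hham := IsSelfAdjoint.neg_I_smul_mul_add_mul_star (R := Matrix (Fin n) (Fin n) ℂ) hH P
  simp only [star_eq_conjTranspose] at hdiss hham
  simp only [hnoise, add_mul, mul_add, conjTranspose_add, conjTranspose_sum, sum_mul, mul_sum]
  rw [← hham, ← sum_congr rfl fun k _ => hdiss k]
  simp only [sum_add_distrib]
  abel

/-- Quantum state diffusion (QSD) satisfies the algebraic unraveling condition
for the Lindblad generator, for unit vectors `x`. -/
theorem qsd_unraveling (n K : ℕ) (H : Matrix (Fin n) (Fin n) ℂ) (hH : Hᴴ = H)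
    (L : Fin K → Matrix (Fin n) (Fin n) ℂ) (x : Fin n → ℂ) (hx : cInner x x = 1) :
    (letI a : Fin n → ℂ :=
        ((-Complex.I) • H +
          ∑ k, ((cInner x ((L k)ᴴ.mulVec x)) • L k - (1 / 2 : ℂ) • ((L k)ᴴ * L k) -
            ((1 / 2 : ℂ) * (‖cInner x ((L k).mulVec x)‖ : ℂ) ^ 2) •
              (1 : Matrix (Fin n) (Fin n) ℂ))).mulVec x
     letI b1 : Fin K → Fin n → ℂ := fun k =>
        (1 / Real.sqrt 2 : ℂ) • ((L k).mulVec x - (cInner x ((L k).mulVec x)) • x)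
     letI b2 : Fin K → Fin n → ℂ := fun k =>
        (Complex.I / Real.sqrt 2) • ((L k).mulVec x - (cInner x ((L k).mulVec x)) • x)
     outerProd a x + outerProd x a + ∑ k, (outerProd (b1 k) (b1 k) + outerProd (b2 k) (b2 k))) =
      (-Complex.I) • (H * outerProd x x - outerProd x x * H) +
        ∑ k, (L k * outerProd x x * (L k)ᴴ -
          (1 / 2 : ℂ) • ((L k)ᴴ * L k * outerProd x x + outerProd x x * ((L k)ᴴ * L k))) :=
  qsd_unraveling_general n K H hH L x
end

section
/- Let U(t) ∈ ℂ^{n×r} with U(t)†U(t) = Id_r, σ(t) := E[Y_t Y_t†] positive definite r×r, and define ρ_LR(t) := U(t)σ(t)U(t)†. If Y_t satisfies dY = U†(t)a(U(t)Y,t)dt + Σ_j U†(t)b_j(U(t)Y,t)dW_j with (a,b_j) satisfying the unraveling condition a(x,t)x† + xa(x,t)† + Σ_j b_j(x,t)b_j(x,t)† = L(xx†), then dσ/dt = U(t)† L(U(t)σ(t)U(t)†) U(t). -/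
/-!
Since `U†U = 1`, the Itô integrand `Y a†U + U†a Y† + Σ_j U†b_j b_j†U` at `x = UY` is the
compression `U† (a x† + x a† + Σ_j b_j b_j†) U` of the unraveling expression, i.e.
`U† L(U Y Y† U†) U`. This is linear in `Y Y†`, so taking expectations turns it into
`U† L(U σ U†) U`.
-/

open Matrix MeasureTheory Finset
open scoped ComplexOrder

attribute [local instance] Matrix.frobeniusNormedAddCommGroup Matrix.frobeniusNormedSpace

/-- The Lindblad superoperator `L(ρ) = −i[H,ρ] + Σ_k (L_kρL_k† − ½{L_k†L_k,ρ})`. -/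
noncomputable def lindblad {n K : ℕ} (H : Matrix (Fin n) (Fin n) ℂ)
    (L : Fin K → Matrix (Fin n) (Fin n) ℂ) (ρ : Matrix (Fin n) (Fin n) ℂ) :
    Matrix (Fin n) (Fin n) ℂ :=
  (-Complex.I) • (H * ρ - ρ * H) +
    ∑ k, (L k * ρ * (L k)ᴴ - (1 / 2 : ℂ) • ((L k)ᴴ * L k * ρ + ρ * ((L k)ᴴ * L k)))

lemma mul_outerProd {n m p : ℕ} (A : Matrix (Fin n) (Fin m) ℂ) (v : Fin m → ℂ)
    (w : Fin p → ℂ) : A * outerProd v w = outerProd (A *ᵥ v) w := by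
  ext i j
  simp [outerProd, Matrix.mul_apply, Matrix.mulVec, dotProduct, Finset.sum_mul, mul_assoc]

lemma outerProd_mulVec {n m p : ℕ} (v : Fin n → ℂ) (A : Matrix (Fin m) (Fin p) ℂ)
    (w : Fin p → ℂ) : outerProd v (A *ᵥ w) = outerProd v w * Aᴴ := by
  ext i j
  simp [outerProd, Matrix.mul_apply, Matrix.mulVec, dotProduct, Finset.mul_sum, star_sum,
    mul_comm, mul_left_comm]

lemma outerProd_mulVec_mulVec {n m p q : ℕ} (A : Matrix (Fin n) (Fin m) ℂ)
    (B : Matrix (Fin p) (Fin q) ℂ) (v : Fin m → ℂ) (w : Fin q → ℂ) :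
    outerProd (A *ᵥ v) (B *ᵥ w) = A * outerProd v w * Bᴴ := by
  rw [outerProd_mulVec, mul_outerProd]

section Compression

variable {n r : ℕ} {U : Matrix (Fin n) (Fin r) ℂ}

lemma conjTranspose_mulVec_mulVec_of_isometry (hU : Uᴴ * U = 1) (y : Fin r → ℂ) :
    Uᴴ *ᵥ (U *ᵥ y) = y := by
  rw [mulVec_mulVec, hU, one_mulVec]

lemma compress_unraveling {N : ℕ} (hU : Uᴴ * U = 1) (y : Fin r → ℂ) (a : Fin n → ℂ)
    (b : Fin N → Fin n → ℂ) :
    Uᴴ * (outerProd a (U *ᵥ y) + outerProd (U *ᵥ y) a + ∑ j, outerProd (b j) (b j)) * U =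
      outerProd y (Uᴴ *ᵥ a) + outerProd (Uᴴ *ᵥ a) y +
        ∑ j, outerProd (Uᴴ *ᵥ b j) (Uᴴ *ᵥ b j) := by
  have hcompress : ∀ v w : Fin n → ℂ, Uᴴ * outerProd v w * U = outerProd (Uᴴ *ᵥ v) (Uᴴ *ᵥ w) :=
    fun v w => by rw [outerProd_mulVec_mulVec, conjTranspose_conjTranspose]
  simp only [Matrix.mul_add, Matrix.add_mul, Matrix.mul_sum, Matrix.sum_mul, hcompress,
    conjTranspose_mulVec_mulVec_of_isometry hU]
  abel

end Compression

section Lindblad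

variable {n K : ℕ} (H : Matrix (Fin n) (Fin n) ℂ) (L : Fin K → Matrix (Fin n) (Fin n) ℂ)

lemma lindblad_add (ρ σ : Matrix (Fin n) (Fin n) ℂ) :
    lindblad H L (ρ + σ) = lindblad H L ρ + lindblad H L σ := by
  simp only [lindblad, Matrix.mul_add, Matrix.add_mul, smul_add, smul_sub, Finset.sum_add_distrib,
    Finset.sum_sub_distrib]
  abel

lemma lindblad_smul (c : ℂ) (ρ : Matrix (Fin n) (Fin n) ℂ) :
    lindblad H L (c • ρ) = c • lindblad H L ρ := by
  simp only [lindblad, Matrix.mul_smul, Matrix.smul_mul, smul_add, smul_sub,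
    Finset.sum_add_distrib, Finset.sum_sub_distrib, ← Finset.smul_sum]
  module

noncomputable def compressedLindblad {r : ℕ} (U : Matrix (Fin n) (Fin r) ℂ) :
    Matrix (Fin r) (Fin r) ℂ →ₗ[ℂ] Matrix (Fin r) (Fin r) ℂ where
  toFun σ := Uᴴ * lindblad H L (U * σ * Uᴴ) * U
  map_add' σ τ := by
    rw [Matrix.mul_add, Matrix.add_mul, lindblad_add, Matrix.mul_add, Matrix.add_mul]
  map_smul' c σ := by
    rw [Matrix.mul_smul, Matrix.smul_mul, lindblad_smul, Matrix.mul_smul, Matrix.smul_mul,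
      RingHom.id_apply]

lemma integral_compressedLindblad {r : ℕ} (U : Matrix (Fin n) (Fin r) ℂ) {α : Type*}
    [MeasurableSpace α] {μ : Measure α} {f : α → Matrix (Fin r) (Fin r) ℂ}
    -- instance search does not find `ContinuousENorm` for the Frobenius norm
    (hf : @Integrable _ _ SeminormedAddGroup.toContinuousENorm _ _ f μ) :
    ∫ y, Uᴴ * lindblad H L (U * f y * Uᴴ) * U ∂μ =
      Uᴴ * lindblad H L (U * (∫ y, f y ∂μ) * Uᴴ) * U :=
  (compressedLindblad H L U).toContinuousLinearMap.integral_comp_comm hf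

end Lindblad

theorem lowrank_second_moment_evolution_general (n r N K : ℕ)
    (H : Matrix (Fin n) (Fin n) ℂ)
    (L : Fin K → Matrix (Fin n) (Fin n) ℂ)
    (a : (Fin n → ℂ) → ℝ → (Fin n → ℂ))
    (b : Fin N → (Fin n → ℂ) → ℝ → (Fin n → ℂ))
    (U : Matrix (Fin n) (Fin r) ℂ) (hU : Uᴴ * U = 1)
    (θ : ℝ → Measure (Fin r → ℂ)) (t₀ : ℝ)
    (hint : @Integrable _ _ SeminormedAddGroup.toContinuousENorm _ _ (fun y => outerProd y y) (θ t₀))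
    (hIto : HasDerivAt (fun t => ∫ y, outerProd y y ∂θ t)
      (∫ y, (outerProd y (Uᴴ.mulVec (a (U.mulVec y) t₀)) +
          outerProd (Uᴴ.mulVec (a (U.mulVec y) t₀)) y +
          ∑ j, outerProd (Uᴴ.mulVec (b j (U.mulVec y) t₀))
            (Uᴴ.mulVec (b j (U.mulVec y) t₀))) ∂θ t₀) t₀)
    (hunravel : ∀ (x : Fin n → ℂ) (t : ℝ),
      outerProd (a x t) x + outerProd x (a x t) +
          ∑ j, outerProd (b j x t) (b j x t) =
        lindblad H L (outerProd x x)) :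
    HasDerivAt (fun t => ∫ y, outerProd y y ∂θ t)
      (Uᴴ * lindblad H L (U * (∫ y, outerProd y y ∂θ t₀) * Uᴴ) * U) t₀ := by
  have hdrift : ∀ y : Fin r → ℂ,
      outerProd y (Uᴴ *ᵥ a (U *ᵥ y) t₀) + outerProd (Uᴴ *ᵥ a (U *ᵥ y) t₀) y +
          ∑ j, outerProd (Uᴴ *ᵥ b j (U *ᵥ y) t₀) (Uᴴ *ᵥ b j (U *ᵥ y) t₀) =
        Uᴴ * lindblad H L (U * outerProd y y * Uᴴ) * U := fun y => by
    rw [← compress_unraveling hU, hunravel, outerProd_mulVec_mulVec]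
  simpa only [hdrift, integral_compressedLindblad H L U hint] using hIto

/-- If `Y_t` (with law `θ_t`) solves the projected SDE
`dY = U†a(UY,t)dt + Σ_j U†b_j(UY,t)dW_j` — encoded by Itô's formula for
`σ(t) := E[Y_tY_t†]`, namely
`dσ/dt = E[Y a†(UY,t)U + U†a(UY,t)Y† + Σ_j U†b_j(UY,t)b_j†(UY,t)U]` — and the
coefficients `(a, b_j)` satisfy the unraveling condition
`a(x,t)x† + x a†(x,t) + Σ_j b_j b_j†(x,t) = L(xx†)`, then with
`ρ_LR(t) = U σ(t) U†` one has `dσ/dt = U† L(U σ(t) U†) U`. -/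
theorem lowrank_second_moment_evolution (n r N K : ℕ)
    (H : Matrix (Fin n) (Fin n) ℂ) (hH : Hᴴ = H)
    (L : Fin K → Matrix (Fin n) (Fin n) ℂ)
    (a : (Fin n → ℂ) → ℝ → (Fin n → ℂ))
    (b : Fin N → (Fin n → ℂ) → ℝ → (Fin n → ℂ))
    (U : Matrix (Fin n) (Fin r) ℂ) (hU : Uᴴ * U = 1)
    (θ : ℝ → Measure (Fin r → ℂ)) (t₀ : ℝ)
    (hint : @Integrable _ _ SeminormedAddGroup.toContinuousENorm _ _ (fun y => outerProd y y) (θ t₀))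
    (hpos : (∫ y, outerProd y y ∂θ t₀).PosDef)
    (hIto : HasDerivAt (fun t => ∫ y, outerProd y y ∂θ t)
      (∫ y, (outerProd y (Uᴴ.mulVec (a (U.mulVec y) t₀)) +
          outerProd (Uᴴ.mulVec (a (U.mulVec y) t₀)) y +
          ∑ j, outerProd (Uᴴ.mulVec (b j (U.mulVec y) t₀))
            (Uᴴ.mulVec (b j (U.mulVec y) t₀))) ∂θ t₀) t₀)
    (hunravel : ∀ (x : Fin n → ℂ) (t : ℝ),
      outerProd (a x t) x + outerProd x (a x t) +
          ∑ j, outerProd (b j x t) (b j x t) =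
        lindblad H L (outerProd x x)) :
    HasDerivAt (fun t => ∫ y, outerProd y y ∂θ t)
      (Uᴴ * lindblad H L (U * (∫ y, outerProd y y ∂θ t₀) * Uᴴ) * U) t₀ :=
  lowrank_second_moment_evolution_general n r N K H L a b U hU θ t₀ hint hIto hunravel
end

section
/- With the constraint that dŨ/dt = iG(t)Ũ(t) for Hermitian G(t) = Q_{Ũ}G P_{Ũ} + h.c., the dynamical low-rank approximation of the Lindblad equation on the manifold {ŨσŨ† : Ũ†Ũ = Id_r, σ > 0} has the unique solution: dσ/dt = Ũ† L(ρ_LR) Ũ and dŨ/dt = Q_{Ũ} L(ρ_LR) Ũ σ^{-1}, where ρ_LR = ŨσŨ†. Equivalently, with C := L(ρ_LR) − (iGŨσŨ† + ŨηŨ† − iŨσŨ†G), the stationarity conditions Q_{Ũ}[ρ_LR, C]P_{Ũ} = 0 and Ũ†CŨ = 0 uniquely determine η = Ũ†L(ρ_LR)Ũ and Q_{Ũ}GP_{Ũ} = −i Q_{Ũ} L(ρ_LR) Ũ σ^{-1} Ũ†. -/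
open Matrix
open scoped ComplexOrder

private lemma mulUU {n r m : ℕ} {U : Matrix (Fin n) (Fin r) ℂ} (hU : Uᴴ * U = 1)
    (X : Matrix (Fin r) (Fin m) ℂ) : Uᴴ * (U * X) = X := by
  rw [← Matrix.mul_assoc, hU, Matrix.one_mul]

private lemma mul_mul_zero {a b c d : ℕ} {A : Matrix (Fin a) (Fin b) ℂ}
    {B : Matrix (Fin b) (Fin c) ℂ} (h : A * B = 0) (X : Matrix (Fin c) (Fin d) ℂ) :
    A * (B * X) = 0 := by rw [← Matrix.mul_assoc, h, Matrix.zero_mul]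

private lemma cancelU {n r m : ℕ} {U : Matrix (Fin n) (Fin r) ℂ} (hU : Uᴴ * U = 1)
    {X Y : Matrix (Fin m) (Fin r) ℂ} : X * Uᴴ = Y * Uᴴ ↔ X = Y := by
  constructor
  · intro h
    have h2 := congrArg (fun M => M * U) h
    simpa [Matrix.mul_assoc, hU] using h2
  · rintro rfl; rfl

private lemma cancelσ {r m : ℕ} {σ : Matrix (Fin r) (Fin r) ℂ} (hs : σ * σ⁻¹ = 1)
    {X Y : Matrix (Fin m) (Fin r) ℂ} : X * σ = Y * σ ↔ X = Y := by
  constructor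
  · intro h
    have h2 := congrArg (fun M => M * σ⁻¹) h
    simpa [Matrix.mul_assoc, hs] using h2
  · rintro rfl; rfl

/-- Dynamical low-rank approximation of the Lindblad equation (Le Bris–Rouchon,
modified): on the manifold `{ŨσŨ† : Ũ†Ũ = Id_r, σ > 0}`, with tangent vectors
`iGρ_LR + ŨηŨ† − iρ_LR G` (`G` Hermitian with `G = QGP + (QGP)†`, `η` Hermitian),
the first-order stationarity conditions `Q[ρ_LR, C]P = 0` and `Ũ†CŨ = 0` — for
`C := L(ρ_LR) − (iGρ_LR + ŨηŨ† − iρ_LR G)` — hold if and only if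
`η = Ũ†L(ρ_LR)Ũ` and `QGP = −i·Q L(ρ_LR) Ũ σ⁻¹ Ũ†`; i.e. the critical point is
unique and gives `dσ/dt = Ũ†L(ρ_LR)Ũ`, `dŨ/dt = iGŨ = Q L(ρ_LR) Ũ σ⁻¹`. -/
theorem lowrank_lindblad_stationarity (n r : ℕ)
    (Lop : Matrix (Fin n) (Fin n) ℂ →ₗ[ℂ] Matrix (Fin n) (Fin n) ℂ)
    (U : Matrix (Fin n) (Fin r) ℂ) (hU : Uᴴ * U = 1)
    (σ : Matrix (Fin r) (Fin r) ℂ) (hσ : σ.PosDef)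
    (G : Matrix (Fin n) (Fin n) ℂ) (hG : Gᴴ = G)
    (hGstruct : G = (1 - U * Uᴴ) * G * (U * Uᴴ) + ((1 - U * Uᴴ) * G * (U * Uᴴ))ᴴ)
    (η : Matrix (Fin r) (Fin r) ℂ) (hη : ηᴴ = η) :
    letI P : Matrix (Fin n) (Fin n) ℂ := U * Uᴴ
    letI Q : Matrix (Fin n) (Fin n) ℂ := 1 - U * Uᴴ
    letI ρ : Matrix (Fin n) (Fin n) ℂ := U * σ * Uᴴ
    letI C : Matrix (Fin n) (Fin n) ℂ :=
      Lop ρ - (Complex.I • (G * ρ) + U * η * Uᴴ - Complex.I • (ρ * G))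
    (Q * (ρ * C - C * ρ) * P = 0 ∧ Uᴴ * C * U = 0) ↔
      (η = Uᴴ * Lop ρ * U ∧
        Q * G * P = (-Complex.I) • (Q * Lop ρ * U * σ⁻¹ * Uᴴ)) := by
  have hdet : IsUnit σ.det := (Matrix.isUnit_iff_isUnit_det σ).mp hσ.isUnit
  have hσσ : σ * σ⁻¹ = 1 := Matrix.mul_nonsing_inv σ hdet
  have hσσ' : σ⁻¹ * σ = 1 := Matrix.nonsing_inv_mul σ hdet
  set ρ := U * σ * Uᴴ with hρ
  set P := U * Uᴴ with hPdef
  set Q := 1 - P with hQdef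
  set C := Lop ρ - (Complex.I • (G * ρ) + U * η * Uᴴ - Complex.I • (ρ * G)) with hCdef
  have hPU : P * U = U := by rw [hPdef, Matrix.mul_assoc, hU, Matrix.mul_one]
  have hQU : Q * U = 0 := by rw [hQdef, Matrix.sub_mul, Matrix.one_mul, hPU, sub_self]
  have hUP : Uᴴ * P = Uᴴ := by rw [hPdef, ← Matrix.mul_assoc, hU, Matrix.one_mul]
  have hUQ : Uᴴ * Q = 0 := by rw [hQdef, Matrix.mul_sub, Matrix.mul_one, hUP, sub_self]
  have hρU : ρ * U = U * σ := by rw [hρ, Matrix.mul_assoc, hU, Matrix.mul_one]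
  have hUρ : Uᴴ * ρ = σ * Uᴴ := by
    rw [hρ, ← Matrix.mul_assoc, ← Matrix.mul_assoc, hU, Matrix.one_mul]
  have hQρ : Q * ρ = 0 := by
    rw [hρ, ← Matrix.mul_assoc, ← Matrix.mul_assoc, hQU, Matrix.zero_mul, Matrix.zero_mul]
  have hρP : ρ * P = ρ := by
    rw [hρ, hPdef, Matrix.mul_assoc (U * σ) Uᴴ (U * Uᴴ), ← Matrix.mul_assoc Uᴴ U Uᴴ, hU,
      Matrix.one_mul]
  have hG2 : G = Q * G * P + P * G * Q := by
    conv_lhs => rw [hGstruct]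
    rw [hQdef, hPdef]
    simp only [conjTranspose_mul, conjTranspose_sub, conjTranspose_one,
      conjTranspose_conjTranspose, hG, Matrix.mul_assoc]
  have hUGU0 : Uᴴ * (G * U) = 0 := by
    conv_lhs => rw [hG2]
    simp only [Matrix.add_mul, Matrix.mul_add, ← Matrix.mul_assoc, hUQ, hUP, Matrix.zero_mul,
      hPU, hQU, Matrix.mul_zero, add_zero, zero_add]
    rw [Matrix.mul_assoc, hQU, Matrix.mul_zero]
  have hρρ : ρ * ρ = U * (σ * (σ * Uᴴ)) := by
    rw [hρ]
    simp only [Matrix.mul_assoc, mulUU hU]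
  have hUGUX : ∀ (m : ℕ) (X : Matrix (Fin r) (Fin m) ℂ), Uᴴ * (G * (U * X)) = 0 := by
    intro m X
    rw [← Matrix.mul_assoc G U X, ← Matrix.mul_assoc Uᴴ (G * U) X, hUGU0, Matrix.zero_mul]
  have hUρGU : Uᴴ * (ρ * (G * U)) = 0 := by
    rw [← Matrix.mul_assoc Uᴴ ρ (G * U), hUρ, Matrix.mul_assoc σ Uᴴ (G * U), hUGU0,
      Matrix.mul_zero]
  -- condition 2
  have hCU : C * U =
      Lop ρ * U - (Complex.I • (G * (U * σ)) + U * η - Complex.I • (ρ * (G * U))) := by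
    rw [hCdef]
    simp only [Matrix.sub_mul, Matrix.add_mul, Matrix.smul_mul, Matrix.mul_assoc, hρU, hU,
      Matrix.mul_one]
  have hUCU : Uᴴ * (C * U) = Uᴴ * (Lop ρ * U) - η := by
    rw [hCU]
    simp only [Matrix.mul_sub, Matrix.mul_add, Matrix.mul_smul, mulUU hU, hUGUX, hUρGU,
      smul_zero, sub_zero, zero_add]
  have E2 : (Uᴴ * C * U = 0) ↔ η = Uᴴ * Lop ρ * U := by
    rw [Matrix.mul_assoc Uᴴ C U, hUCU, sub_eq_zero, ← Matrix.mul_assoc, eq_comm]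
  -- condition 1
  have hQCρ : Q * (C * ρ) =
      Q * (Lop ρ * ρ) - Complex.I • (Q * (G * (U * (σ * (σ * Uᴴ))))) := by
    rw [hCdef]
    simp only [Matrix.sub_mul, Matrix.add_mul, Matrix.smul_mul, Matrix.mul_sub, Matrix.mul_add,
      Matrix.mul_smul, Matrix.mul_assoc, hUρ, hρρ, mul_mul_zero hQU, mul_mul_zero hQρ,
      smul_zero, sub_zero, add_zero, zero_add]
  have hcond1eq : Q * (ρ * C - C * ρ) * P =
      -((Q * Lop ρ * U) * (σ * Uᴴ) - Complex.I • ((Q * G * U) * (σ * (σ * Uᴴ)))) := by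
    have t1 : Q * (ρ * C) = 0 := mul_mul_zero hQρ C
    have t2 : Q * (C * ρ) * P = Q * (C * ρ) := by
      rw [Matrix.mul_assoc, Matrix.mul_assoc C ρ P, hρP]
    calc Q * (ρ * C - C * ρ) * P = (Q * (ρ * C) - Q * (C * ρ)) * P := by
          rw [Matrix.mul_sub]
      _ = -(Q * (C * ρ)) * P := by rw [t1, zero_sub]
      _ = -(Q * (C * ρ) * P) := by rw [Matrix.neg_mul]
      _ = -(Q * (C * ρ)) := by rw [t2]
      _ = _ := by
          have e1 : Q * (Lop ρ * ρ) = (Q * Lop ρ * U) * (σ * Uᴴ) := by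
            rw [hρ]
            simp only [Matrix.mul_assoc]
          have e2 : Q * (G * (U * (σ * (σ * Uᴴ)))) = (Q * G * U) * (σ * (σ * Uᴴ)) := by
            simp only [Matrix.mul_assoc]
          rw [hQCρ, e1, e2]
  have E1 : (Q * (ρ * C - C * ρ) * P = 0) ↔
      Q * G * P = (-Complex.I) • (Q * Lop ρ * U * σ⁻¹ * Uᴴ) := by
    rw [hcond1eq, neg_eq_zero, sub_eq_zero]
    set A := Q * Lop ρ * U with hA
    set K := Q * G * U with hK
    have step1 : (A * (σ * Uᴴ) = Complex.I • (K * (σ * (σ * Uᴴ)))) ↔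
        (A * σ = Complex.I • (K * (σ * σ))) := by
      rw [← Matrix.mul_assoc A σ Uᴴ, ← Matrix.mul_assoc K σ (σ * Uᴴ),
        ← Matrix.mul_assoc (K * σ) σ Uᴴ, ← Matrix.smul_mul, cancelU hU,
        Matrix.mul_assoc K σ σ]
    have step2 : (A * σ = Complex.I • (K * (σ * σ))) ↔ (A = Complex.I • (K * σ)) := by
      rw [← Matrix.mul_assoc K σ σ, ← Matrix.smul_mul, cancelσ hσσ]
    have step3 : (A = Complex.I • (K * σ)) ↔ K = (-Complex.I) • (A * σ⁻¹) := by
      constructor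
      · intro h
        rw [h, Matrix.smul_mul, smul_smul, Matrix.mul_assoc, hσσ, Matrix.mul_one]
        simp [Complex.I_mul_I]
      · intro h
        rw [h, Matrix.smul_mul, smul_smul, Matrix.mul_assoc, hσσ', Matrix.mul_one]
        simp [Complex.I_mul_I]
    have step4 : (K = (-Complex.I) • (A * σ⁻¹)) ↔
        Q * G * P = (-Complex.I) • (A * σ⁻¹ * Uᴴ) := by
      rw [hPdef, ← Matrix.mul_assoc (Q * G) U Uᴴ, ← hK,
        ← Matrix.smul_mul (-Complex.I) (A * σ⁻¹) Uᴴ, cancelU hU]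
    rw [step1, step2, step3, step4]
  constructor
  · rintro ⟨h1, h2⟩
    exact ⟨E2.mp h2, E1.mp h1⟩
  · rintro ⟨h1, h2⟩
    exact ⟨E1.mpr h2, E2.mpr h1⟩
end
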